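/- Let p ∈ (1,n), q > 1, and let Ω, Ω₁ be bounded convex domains containing the origin. Then the L_q mixed p-capacity satisfies C_{p,q}(Ω, Ω₁) ≥ C_p(Ω)^{(n-p-q)/(n-p)} · C_p(Ω₁)^{q/(n-p)}. -/

import Mathlib

/-
By Hölder's inequality (equivalently, Jensen's inequality for `t ↦ t^q` against the probability
measure `h_Ω dμ_p / ∫ h_Ω dμ_p`),
`(∫ h_{Ω₁} dμ_p)^q ≤ (∫ h_{Ω₁}^q h_Ω^{1-q} dμ_p) (∫ h_Ω dμ_p)^{q-1}`, that is
`C_{p,q}(Ω,Ω₁) ≥ C_p(Ω,Ω₁)^q C_p(Ω)^{1-q}`. The `p`-capacitary Minkowski inequality bounds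
`C_p(Ω,Ω₁)` from below by `C_p(Ω)^{(n-p-1)/(n-p)} C_p(Ω₁)^{1/(n-p)}`, and the exponents of `C_p(Ω)`
add up to `(n-p-q)/(n-p)`. Support functions of bounded domains containing the origin are
continuous and positive on the sphere, so all the integrals are finite.
-/

open MeasureTheory Set

/-- The support function `h_K(u) = sup_{x ∈ K} ⟨x, u⟩` of a set `K ⊆ ℝⁿ`. -/
noncomputable def suppFn (n : ℕ) (K : Set (EuclideanSpace ℝ (Fin n)))
    (u : EuclideanSpace ℝ (Fin n)) : ℝ :=
  sSup ((fun x => (inner ℝ x u : ℝ)) '' K)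

/-- A bounded open convex domain containing the origin. -/
def IsConvexDomain (n : ℕ) (Ω : Set (EuclideanSpace ℝ (Fin n))) : Prop :=
  IsOpen Ω ∧ Convex ℝ Ω ∧ Bornology.IsBounded Ω ∧ (0 : EuclideanSpace ℝ (Fin n)) ∈ Ω

section Holder

variable {α : Type*} [MeasurableSpace α] {μ : Measure α}

theorem MeasureTheory.Integrable.memLp_rpow_inv {Φ : α → ℝ} (hΦ : Integrable Φ μ)
    (hΦ0 : ∀ x, 0 ≤ Φ x) {r : ℝ} (hr : 0 < r) : MemLp (fun x => Φ x ^ r⁻¹) (ENNReal.ofReal r) μ := by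
  have hmeas : AEStronglyMeasurable (fun x => Φ x ^ r⁻¹) μ :=
    (hΦ.aemeasurable.pow_const _).aestronglyMeasurable
  rw [← integrable_norm_rpow_iff hmeas (by simpa using hr) ENNReal.ofReal_ne_top]
  refine hΦ.congr (ae_of_all _ fun x => ?_)
  dsimp only
  rw [ENNReal.toReal_ofReal hr.le, Real.norm_of_nonneg (Real.rpow_nonneg (hΦ0 x) _),
    ← Real.rpow_mul (hΦ0 x), inv_mul_cancel₀ hr.ne', Real.rpow_one]

theorem rpow_integral_le_integral_rpow_mul_rpow {f g : α → ℝ} {q : ℝ} (hq : 1 < q)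
    (hf : ∀ x, 0 < f x) (hg : ∀ x, 0 ≤ g x) (hfi : Integrable f μ)
    (hΦi : Integrable (fun x => g x ^ q * f x ^ (1 - q)) μ) :
    (∫ x, g x ∂μ) ^ q ≤ (∫ x, g x ^ q * f x ^ (1 - q) ∂μ) * (∫ x, f x ∂μ) ^ (q - 1) := by
  set r := q.conjExponent
  have hqr : q.HolderConjugate r := .conjExponent hq
  have hq0 : 0 < q := zero_lt_one.trans hq
  have hΦ0 : ∀ x, 0 ≤ g x ^ q * f x ^ (1 - q) := fun x =>
    mul_nonneg (Real.rpow_nonneg (hg x) _) (Real.rpow_nonneg (hf x).le _)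
  have hAB : ∀ x, (g x ^ q * f x ^ (1 - q)) ^ q⁻¹ * f x ^ r⁻¹ = g x := fun x => by
    rw [Real.mul_rpow (Real.rpow_nonneg (hg x) _) (Real.rpow_nonneg (hf x).le _),
      ← Real.rpow_mul (hg x), ← Real.rpow_mul (hf x).le, mul_inv_cancel₀ hq0.ne', Real.rpow_one,
      mul_assoc, ← Real.rpow_add (hf x), ← hqr.one_sub_inv]
    field_simp
    simp
  have holder := integral_mul_le_Lp_mul_Lq_of_nonneg hqr
    (ae_of_all _ fun x => Real.rpow_nonneg (hΦ0 x) _)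
    (ae_of_all _ fun x => Real.rpow_nonneg (hf x).le _)
    (hΦi.memLp_rpow_inv hΦ0 hq0) (hfi.memLp_rpow_inv (fun x => (hf x).le) hqr.symm.pos)
  simp only [hAB, ← Real.rpow_mul (hΦ0 _), ← Real.rpow_mul (hf _).le, inv_mul_cancel₀ hq0.ne',
    inv_mul_cancel₀ hqr.symm.pos.ne', Real.rpow_one] at holder
  have hI : 0 ≤ ∫ x, g x ∂μ := integral_nonneg hg
  have hJ : 0 ≤ ∫ x, g x ^ q * f x ^ (1 - q) ∂μ := integral_nonneg hΦ0
  have hK : 0 ≤ ∫ x, f x ∂μ := integral_nonneg fun x => (hf x).le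
  calc (∫ x, g x ∂μ) ^ q
      ≤ ((∫ x, g x ^ q * f x ^ (1 - q) ∂μ) ^ (1 / q) * (∫ x, f x ∂μ) ^ (1 / r)) ^ q :=
        Real.rpow_le_rpow hI holder hq0.le
    _ = _ := by
        rw [Real.mul_rpow (Real.rpow_nonneg hJ _) (Real.rpow_nonneg hK _), ← Real.rpow_mul hJ,
          ← Real.rpow_mul hK, one_div_mul_cancel hq0.ne',
          Real.rpow_one, one_div_mul_eq_div, hqr.div_conj_eq_sub_one]

end Holder

section SupportFunction

variable {n : ℕ} {K : Set (EuclideanSpace ℝ (Fin n))}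

theorem bddAbove_inner_image_of_norm_le {R : ℝ} (hR : ∀ x ∈ K, ‖x‖ ≤ R)
    (u : EuclideanSpace ℝ (Fin n)) : BddAbove ((fun x => (inner ℝ x u : ℝ)) '' K) := by
  refine ⟨R * ‖u‖, ?_⟩
  rintro _ ⟨x, hx, rfl⟩
  exact (real_inner_le_norm x u).trans (mul_le_mul_of_nonneg_right (hR x hx) (norm_nonneg u))

theorem suppFn_le_add_mul_norm_sub (hne : K.Nonempty) {R : ℝ} (hR : ∀ x ∈ K, ‖x‖ ≤ R)
    (u v : EuclideanSpace ℝ (Fin n)) : suppFn n K u ≤ suppFn n K v + R * ‖u - v‖ := by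
  refine csSup_le (hne.image _) ?_
  rintro _ ⟨x, hx, rfl⟩
  have hv : (inner ℝ x v : ℝ) ≤ suppFn n K v :=
    le_csSup (bddAbove_inner_image_of_norm_le hR v) ⟨x, hx, rfl⟩
  have huv : (inner ℝ x (u - v) : ℝ) ≤ R * ‖u - v‖ :=
    (real_inner_le_norm x _).trans (mul_le_mul_of_nonneg_right (hR x hx) (norm_nonneg _))
  rw [inner_sub_right] at huv
  linarith

theorem continuous_suppFn (hK : Bornology.IsBounded K) (hne : K.Nonempty) :
    Continuous (suppFn n K) := by
  obtain ⟨R, hR⟩ := hK.exists_norm_le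
  refine (LipschitzWith.of_le_add_mul' R fun u v => ?_).continuous
  simpa only [dist_eq_norm] using suppFn_le_add_mul_norm_sub hne hR u v

theorem suppFn_pos (hK : Bornology.IsBounded K) (h0 : 0 ∈ interior K)
    {u : EuclideanSpace ℝ (Fin n)} (hu : u ≠ 0) : 0 < suppFn n K u := by
  obtain ⟨R, hR⟩ := hK.exists_norm_le
  have hsmul : ∀ᶠ t : ℝ in nhds 0, t • u ∈ K := by
    have : Filter.Tendsto (fun t : ℝ => t • u) (nhds 0) (nhds 0) := by
      simpa using (Filter.tendsto_id (x := nhds (0 : ℝ))).smul_const u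
    exact this (mem_interior_iff_mem_nhds.1 h0)
  obtain ⟨t, htK, ht⟩ :=
    ((hsmul.filter_mono nhdsWithin_le_nhds).and (self_mem_nhdsWithin (s := Ioi (0 : ℝ)))).exists
  calc 0 < t * ‖u‖ ^ 2 := by have := norm_pos_iff.2 hu; positivity
    _ = inner ℝ (t • u) u := by rw [real_inner_smul_left, real_inner_self_eq_norm_sq]
    _ ≤ suppFn n K u := le_csSup (bddAbove_inner_image_of_norm_le hR u) ⟨_, htK, rfl⟩

end SupportFunction

theorem rpow_sub_div_mul_rpow_div_le {X Y Z W m q : ℝ} (hX : 0 ≤ X) (hY : 0 < Y) (hW : 0 ≤ W)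
    (hm : 0 < m) (hq : 0 ≤ q) (hXZ : X ^ q ≤ Z * Y ^ (q - 1)) (hXW : Y ^ (m - 1) * W ≤ X ^ m) :
    Y ^ ((m - q) / m) * W ^ (q / m) ≤ Z := by
  calc Y ^ ((m - q) / m) * W ^ (q / m) = (Y ^ (m - 1) * W) ^ (q / m) * Y ^ (1 - q) := by
        rw [Real.mul_rpow (by positivity) hW, ← Real.rpow_mul hY.le, mul_right_comm,
          ← Real.rpow_add hY]
        congr 2
        field_simp
        ring
    _ ≤ (X ^ m) ^ (q / m) * Y ^ (1 - q) := by gcongr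
    _ = X ^ q * Y ^ (1 - q) := by rw [← Real.rpow_mul hX, mul_div_cancel₀ q hm.ne']
    _ ≤ Z * Y ^ (q - 1) * Y ^ (1 - q) := by gcongr
    _ = Z := by
        rw [mul_assoc, ← Real.rpow_add hY, sub_add_sub_cancel', sub_self, Real.rpow_zero, mul_one]

theorem IsConvexDomain.continuous_suppFn {n : ℕ} {Ω : Set (EuclideanSpace ℝ (Fin n))}
    (hΩ : IsConvexDomain n Ω) : Continuous (suppFn n Ω) :=
  _root_.continuous_suppFn hΩ.2.2.1 ⟨0, hΩ.2.2.2⟩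

theorem IsConvexDomain.suppFn_pos {n : ℕ} {Ω : Set (EuclideanSpace ℝ (Fin n))}
    (hΩ : IsConvexDomain n Ω) {u : EuclideanSpace ℝ (Fin n)} (hu : u ≠ 0) : 0 < suppFn n Ω u :=
  _root_.suppFn_pos hΩ.2.2.1 (hΩ.1.interior_eq.symm ▸ hΩ.2.2.2) hu

theorem IsConvexDomain.rpow_integral_suppFn_le {n : ℕ} {Ω Ω₁ : Set (EuclideanSpace ℝ (Fin n))}
    (hΩ : IsConvexDomain n Ω) (hΩ₁ : IsConvexDomain n Ω₁)
    (μ : Measure (Metric.sphere (0 : EuclideanSpace ℝ (Fin n)) 1)) [IsFiniteMeasure μ]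
    {q : ℝ} (hq : 1 < q) :
    (∫ u, suppFn n Ω₁ u ∂μ) ^ q ≤
      (∫ u, suppFn n Ω₁ u ^ q * suppFn n Ω u ^ (1 - q) ∂μ) * (∫ u, suppFn n Ω u ∂μ) ^ (q - 1) := by
  have hf : ∀ u : Metric.sphere (0 : EuclideanSpace ℝ (Fin n)) 1, 0 < suppFn n Ω u :=
    fun u => hΩ.suppFn_pos (ne_zero_of_mem_unit_sphere u)
  have hfc : Continuous fun u : Metric.sphere (0 : EuclideanSpace ℝ (Fin n)) 1 => suppFn n Ω u :=
    hΩ.continuous_suppFn.comp continuous_subtype_val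
  have hΦc : Continuous fun u : Metric.sphere (0 : EuclideanSpace ℝ (Fin n)) 1 =>
      suppFn n Ω₁ u ^ q * suppFn n Ω u ^ (1 - q) :=
    ((hΩ₁.continuous_suppFn.comp continuous_subtype_val).rpow_const fun _ => .inr (by linarith)).mul
      (hfc.rpow_const fun u => .inl (hf u).ne')
  exact rpow_integral_le_integral_rpow_mul_rpow hq hf
    (fun u => (hΩ₁.suppFn_pos (ne_zero_of_mem_unit_sphere u)).le)
    (hfc.integrable_of_hasCompactSupport (.of_compactSpace _))
    (hΦc.integrable_of_hasCompactSupport (.of_compactSpace _))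

/-- the `L_q` `p`-capacitary Minkowski inequality
`C_{p,q}(Ω,Ω₁) ≥ C_p(Ω)^{(n-p-q)/(n-p)} C_p(Ω₁)^{q/(n-p)}` for `q > 1`, where
`C_{p,q}(Ω,Ω₁) = (p−1)/(n−p) ∫ h_{Ω₁}^q h_Ω^{1−q} dμ_p(Ω,·)`, with `μp` the `p`-capacitary
measure of `Ω`, and `Cp`, `Cp1` the `p`-capacities linked by the Poincaré formula and the
`p`-capacitary Minkowski inequality. -/
theorem Lq_minkowski_capacity (n : ℕ) (p q : ℝ) (hp : 1 < p) (hpn : p < n) (hq : 1 < q)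
    (Ω Ω₁ : Set (EuclideanSpace ℝ (Fin n)))
    (hΩ : IsConvexDomain n Ω) (hΩ₁ : IsConvexDomain n Ω₁)
    (μp : Measure (Metric.sphere (0 : EuclideanSpace ℝ (Fin n)) 1)) [IsFiniteMeasure μp]
    (Cp Cp1 : ℝ) (hCp : 0 < Cp) (hCp1 : 0 < Cp1)
    (hPoincare : (p - 1) / ((n : ℝ) - p) * ∫ u, suppFn n Ω ↑u ∂μp = Cp)
    (hMinkowski : ((p - 1) / ((n : ℝ) - p) * ∫ u, suppFn n Ω₁ ↑u ∂μp) ^ ((n : ℝ) - p)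
      ≥ Cp ^ ((n : ℝ) - p - 1) * Cp1) :
    (p - 1) / ((n : ℝ) - p) *
        ∫ u, (suppFn n Ω₁ ↑u) ^ q * (suppFn n Ω ↑u) ^ (1 - q) ∂μp
      ≥ Cp ^ (((n : ℝ) - p - q) / ((n : ℝ) - p)) * Cp1 ^ (q / ((n : ℝ) - p)) := by
  set c := (p - 1) / ((n : ℝ) - p)
  have hc : 0 < c := div_pos (by linarith) (by linarith)
  have hK : 0 < ∫ u, suppFn n Ω ↑u ∂μp := (pos_iff_pos_of_mul_pos (hPoincare ▸ hCp)).1 hc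
  have hI : 0 ≤ ∫ u, suppFn n Ω₁ ↑u ∂μp :=
    integral_nonneg fun u => (hΩ₁.suppFn_pos (ne_zero_of_mem_unit_sphere u)).le
  refine rpow_sub_div_mul_rpow_div_le (mul_nonneg hc.le hI) hCp hCp1.le (by linarith)
    (by linarith) ?_ hMinkowski
  rw [← hPoincare, Real.mul_rpow hc.le hI, Real.mul_rpow hc.le hK.le, Real.rpow_sub_one hc.ne']
  calc _ ≤ c ^ q * ((∫ u, suppFn n Ω₁ ↑u ^ q * suppFn n Ω ↑u ^ (1 - q) ∂μp) *
        (∫ u, suppFn n Ω ↑u ∂μp) ^ (q - 1)) := by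
        gcongr
        exact hΩ.rpow_integral_suppFn_le hΩ₁ μp hq
    _ = _ := by field_simp
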